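/- Every eigenfunction of the flat Klein bottle K_1 with eigenvalue 2, i.e. every function of the form u(x,y) = (A cos x + B sin x) sin y with (A,B) ≠ (0,0), has exactly two nodal domains on K_1; consequently the eigenvalue λ₃(K_1) = 2 is not Courant-sharp. -/

import Mathlib

open Real

/-- The identification relation on `ℝ²` defining the flat Klein bottle `K_1`
(`a = b = 2π`): `(x,y) ↦ (x + kπ, (−1)^k y + 2πl)`, `k, l ∈ ℤ`. -/
def kleinRel (p q : ℝ × ℝ) : Prop :=
  ∃ k l : ℤ, q.1 = p.1 + k * π ∧ q.2 = (-1 : ℝ) ^ k * p.2 + 2 * π * l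

/-- The flat Klein bottle `K_1` as a quotient topological space. -/
def KleinBottle : Type := Quot kleinRel

instance : TopologicalSpace KleinBottle :=
  (instTopologicalSpaceQuot : TopologicalSpace (Quot kleinRel))

/-! Writing `A cos x + B sin x = R sin (x - a)` with `R > 0`, the nodal set is that of
`sin (x - a) sin y`. Every point of `ℝ²` is equivalent to one of `[a, a + π) × [-π, π)`, on which
this function is positive exactly on `(a, a + π) × (0, π)` and negative exactly on
`(a, a + π) × (-π, 0)`. Hence its positive and negative sets on `K_1` are connected, and the sign
separates the complement of the nodal set into exactly two components. -/

open Set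

theorem exists_pos_mul_sin_sub_eq (A B : ℝ) (h : (A, B) ≠ (0, 0)) :
    ∃ R a : ℝ, 0 < R ∧ ∀ x, A * cos x + B * sin x = R * sin (x - a) := by
  set z : ℂ := ⟨B, -A⟩
  have hz : z ≠ 0 := fun hz => h <| by
    simp only [z, Complex.ext_iff, Complex.zero_re, Complex.zero_im, neg_eq_zero] at hz
    rw [hz.1, hz.2]
  refine ⟨‖z‖, z.arg, norm_pos_iff.mpr hz, fun x => ?_⟩
  have hre : ‖z‖ * cos z.arg = B := Complex.norm_mul_cos_arg z
  have him : ‖z‖ * sin z.arg = -A := Complex.norm_mul_sin_arg z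
  rw [sin_sub]
  linear_combination (-sin x) * hre + cos x * him

section
variable {X : Type*} [TopologicalSpace X] {g : X → ℝ}

theorem card_connectedComponents_eq_two_of_ne_zero (hg : Continuous g) (hg0 : ∀ x, g x ≠ 0)
    (hpos : IsPreconnected {x | 0 < g x}) (hneg : IsPreconnected {x | g x < 0})
    (hpos' : {x | 0 < g x}.Nonempty) (hneg' : {x | g x < 0}.Nonempty) :
    Nat.card (ConnectedComponents X) = 2 := by
  have hneg_iff : ∀ x, g x < 0 ↔ ¬ 0 < g x := fun x => by
    rw [not_lt]; exact (hg0 x).le_iff_lt.symm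
  have hsign : Continuous fun x => decide (0 < g x) := by
    have hpre : (fun x => decide (0 < g x)) ⁻¹' {true} = {x | 0 < g x} := by ext; simp
    rw [continuous_bool_rng true, hpre]
    refine ⟨?_, isOpen_lt continuous_const hg⟩
    convert (isOpen_lt hg (continuous_const (y := (0 : ℝ)))).isClosed_compl using 1
    ext x
    simp [hneg_iff]
  refine (Nat.card_eq_of_bijective hsign.connectedComponentsLift
    ⟨fun c d hcd => ?_, fun b => ?_⟩).trans (by simp)
  · obtain ⟨x, rfl⟩ := ConnectedComponents.surjective_coe c
    obtain ⟨y, rfl⟩ := ConnectedComponents.surjective_coe d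
    simp only [hsign.connectedComponentsLift_apply_coe, decide_eq_decide] at hcd
    rw [eq_comm, ConnectedComponents.coe_eq_coe']
    by_cases hx : 0 < g x
    · exact hpos.subset_connectedComponent hx (hcd.mp hx)
    · exact hneg.subset_connectedComponent ((hneg_iff x).mpr hx)
        ((hneg_iff y).mpr (mt hcd.mpr hx))
  · cases b
    · obtain ⟨x, hx⟩ := hneg'
      exact ⟨x, by simpa [hsign.connectedComponentsLift_apply_coe, ← hneg_iff] using hx⟩
    · obtain ⟨x, hx⟩ := hpos'
      exact ⟨x, by simpa [hsign.connectedComponentsLift_apply_coe] using hx⟩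

theorem card_connectedComponents_setOf_ne_zero_eq_two (hg : Continuous g)
    (hpos : IsPreconnected {x | 0 < g x}) (hneg : IsPreconnected {x | g x < 0})
    (hpos' : {x | 0 < g x}.Nonempty) (hneg' : {x | g x < 0}.Nonempty) :
    Nat.card (ConnectedComponents {x | g x ≠ 0}) = 2 := by
  have hsub : ∀ {T : Set X}, T ⊆ {x | g x ≠ 0} → IsPreconnected T →
      IsPreconnected (Subtype.val ⁻¹' T : Set {x | g x ≠ 0}) := fun hT hTc => by
    rwa [← Topology.IsInducing.subtypeVal.isPreconnected_image, Subtype.image_preimage_coe,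
      inter_eq_right.mpr hT]
  refine card_connectedComponents_eq_two_of_ne_zero (hg.comp continuous_subtype_val)
    (fun x => x.2) (hsub (fun _ hx => ne_of_gt hx) hpos) (hsub (fun _ hx => ne_of_lt hx) hneg)
    ?_ ?_
  · obtain ⟨x, hx⟩ := hpos'
    exact ⟨⟨x, ne_of_gt hx⟩, hx⟩
  · obtain ⟨x, hx⟩ := hneg'
    exact ⟨⟨x, ne_of_lt hx⟩, hx⟩

end

theorem sin_sub_mul_sin_eq_of_kleinRel (a : ℝ) {p q : ℝ × ℝ} (h : kleinRel p q) :
    sin (p.1 - a) * sin p.2 = sin (q.1 - a) * sin q.2 := by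
  obtain ⟨k, l, h1, h2⟩ := h
  rw [h1, h2, show p.1 + k * π - a = p.1 - a + k * π by ring, sin_add_int_mul_pi,
    show (-1 : ℝ) ^ k * p.2 + 2 * π * l = (-1) ^ k * p.2 + l * (2 * π) by ring,
    sin_add_int_mul_two_pi]
  rcases Int.even_or_odd k with hk | hk
  · simp [hk.neg_one_zpow]
  · simp [hk.neg_one_zpow]

noncomputable def kleinEigen (a : ℝ) : Quot kleinRel → ℝ :=
  Quot.lift (fun p => sin (p.1 - a) * sin p.2) fun _ _ => sin_sub_mul_sin_eq_of_kleinRel a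

theorem kleinEigen_mk (a : ℝ) (p : ℝ × ℝ) :
    kleinEigen a (Quot.mk _ p) = sin (p.1 - a) * sin p.2 := rfl

theorem continuous_kleinEigen (a : ℝ) : Continuous (kleinEigen a) :=
  continuous_quot_lift _ <| by fun_prop

def kleinFundamentalDomain (a : ℝ) : Set (ℝ × ℝ) := Ico a (a + π) ×ˢ Ico (-π) π

theorem exists_kleinRel_mem_kleinFundamentalDomain (a : ℝ) (p : ℝ × ℝ) :
    ∃ q ∈ kleinFundamentalDomain a, kleinRel p q := by
  obtain ⟨k, hk, -⟩ := existsUnique_add_zsmul_mem_Ico pi_pos p.1 a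
  obtain ⟨l, hl, -⟩ := existsUnique_add_zsmul_mem_Ico two_pi_pos ((-1) ^ k * p.2) (-π)
  rw [show -π + 2 * π = π by ring, zsmul_eq_mul, mul_comm (l : ℝ)] at hl
  exact ⟨(p.1 + k * π, (-1) ^ k * p.2 + 2 * π * l), ⟨by simpa [zsmul_eq_mul] using hk, hl⟩,
    k, l, rfl, rfl⟩

theorem setOf_eq_image_mk_of_kleinFundamentalDomain (a : ℝ) {P : Quot kleinRel → Prop}
    {T : Set (ℝ × ℝ)} (hT : T ⊆ kleinFundamentalDomain a)
    (hP : ∀ q ∈ kleinFundamentalDomain a, P (Quot.mk _ q) ↔ q ∈ T) :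
    {y | P y} = Quot.mk kleinRel '' T := by
  ext y
  obtain ⟨p, rfl⟩ := Quot.mk_surjective y
  obtain ⟨q, hq, hpq⟩ := exists_kleinRel_mem_kleinFundamentalDomain a p
  rw [mem_ofPred_eq, Quot.sound hpq, hP q hq]
  refine ⟨fun h => ⟨q, h, rfl⟩, ?_⟩
  rintro ⟨t, ht, htq⟩
  rw [← hP q hq, ← htq]
  exact (hP t (hT ht)).mpr ht

theorem setOf_kleinEigen_pos (a : ℝ) :
    {y | 0 < kleinEigen a y} = Quot.mk kleinRel '' (Ioo a (a + π) ×ˢ Ioo 0 π) := by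
  refine setOf_eq_image_mk_of_kleinFundamentalDomain a
    (fun _ ⟨⟨hx₀, hx₁⟩, _, hy₁⟩ => ⟨⟨hx₀.le, hx₁⟩, by linarith [pi_pos], hy₁⟩) ?_
  rintro ⟨x, y⟩ ⟨⟨hx₀, hx₁⟩, hy₀, hy₁⟩
  dsimp only at hx₀ hx₁ hy₀ hy₁
  rw [kleinEigen_mk]
  constructor
  · intro h
    have hsx : 0 ≤ sin (x - a) := sin_nonneg_of_nonneg_of_le_pi (by linarith) (by linarith)
    have hsy : 0 < sin y := pos_of_mul_pos_right h hsx
    refine ⟨⟨lt_of_le_of_ne hx₀ fun (e : a = x) => ?_, hx₁⟩, lt_of_not_ge fun hy => ?_, hy₁⟩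
    · simp [← e] at h
    · linarith [sin_nonpos_of_nonpos_of_neg_pi_le hy hy₀]
  · rintro ⟨⟨hx₀, hx₁⟩, hy₀, hy₁⟩
    exact mul_pos (sin_pos_of_pos_of_lt_pi (by linarith) (by linarith))
      (sin_pos_of_pos_of_lt_pi hy₀ hy₁)

theorem setOf_kleinEigen_neg (a : ℝ) :
    {y | kleinEigen a y < 0} = Quot.mk kleinRel '' (Ioo a (a + π) ×ˢ Ioo (-π) 0) := by
  refine setOf_eq_image_mk_of_kleinFundamentalDomain a
    (fun _ ⟨⟨hx₀, hx₁⟩, hy₀, _⟩ => ⟨⟨hx₀.le, hx₁⟩, hy₀.le, by linarith [pi_pos]⟩) ?_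
  rintro ⟨x, y⟩ ⟨⟨hx₀, hx₁⟩, hy₀, hy₁⟩
  dsimp only at hx₀ hx₁ hy₀ hy₁
  rw [kleinEigen_mk]
  constructor
  · intro h
    have hsx : 0 ≤ sin (x - a) := sin_nonneg_of_nonneg_of_le_pi (by linarith) (by linarith)
    have hsy : sin y < 0 := neg_of_mul_neg_right h hsx
    refine ⟨⟨lt_of_le_of_ne hx₀ fun (e : a = x) => ?_, hx₁⟩,
      lt_of_le_of_ne hy₀ fun (e : -π = y) => ?_, lt_of_not_ge fun hy => ?_⟩
    · simp [← e] at h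
    · simp [← e] at hsy
    · linarith [sin_nonneg_of_nonneg_of_le_pi hy hy₁.le]
  · rintro ⟨⟨hx₀, hx₁⟩, hy₀, hy₁⟩
    exact mul_neg_of_pos_of_neg (sin_pos_of_pos_of_lt_pi (by linarith) (by linarith))
      (sin_neg_of_neg_of_neg_pi_lt hy₁ hy₀)

theorem card_connectedComponents_setOf_kleinEigen_ne_zero (a : ℝ) :
    Nat.card (ConnectedComponents {y | kleinEigen a y ≠ 0}) = 2 := by
  have hrect : ∀ {c d : ℝ}, c < d →
      IsPreconnected (Quot.mk kleinRel '' (Ioo a (a + π) ×ˢ Ioo c d)) ∧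
      (Quot.mk kleinRel '' (Ioo a (a + π) ×ˢ Ioo c d)).Nonempty := fun hcd =>
    ⟨((convex_Ioo _ _).prod (convex_Ioo _ _)).isPreconnected.image _
        continuous_quot_mk.continuousOn,
      ((nonempty_Ioo.mpr (by linarith [pi_pos])).prod (nonempty_Ioo.mpr hcd)).image _⟩
  have hpos := hrect pi_pos
  have hneg := hrect (neg_neg_iff_pos.mpr pi_pos)
  rw [← setOf_kleinEigen_pos] at hpos
  rw [← setOf_kleinEigen_neg] at hneg
  exact card_connectedComponents_setOf_ne_zero_eq_two (continuous_kleinEigen a)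
    hpos.1 hneg.1 hpos.2 hneg.2

/-- every eigenfunction `u(x,y) = (A cos x + B sin x) sin y`,
`(A,B) ≠ (0,0)`, of `K_1` with eigenvalue `2` has exactly two nodal domains;
consequently `λ₃(K_1) = 2` is not Courant-sharp (its label `3` is not attained). -/
theorem lambda3_two_nodal_domains_not_courant_sharp (A B : ℝ) (hAB : (A, B) ≠ (0, 0)) :
    Nat.card (ConnectedComponents
        ↥(Quot.mk kleinRel ''
          {p : ℝ × ℝ | (A * Real.cos p.1 + B * Real.sin p.1) * Real.sin p.2 ≠ 0})) = 2 ∧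
    Nat.card (ConnectedComponents
        ↥(Quot.mk kleinRel ''
          {p : ℝ × ℝ | (A * Real.cos p.1 + B * Real.sin p.1) * Real.sin p.2 ≠ 0})) ≠ 3 := by
  obtain ⟨R, a, hR, hsum⟩ := exists_pos_mul_sin_sub_eq A B hAB
  have hnodal : Quot.mk kleinRel ''
      {p : ℝ × ℝ | (A * Real.cos p.1 + B * Real.sin p.1) * Real.sin p.2 ≠ 0} =
      {y | kleinEigen a y ≠ 0} := by
    rw [← image_preimage_eq {y | kleinEigen a y ≠ 0} Quot.mk_surjective]
    congr 1
    ext p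
    simp [hsum, kleinEigen_mk, mul_assoc, hR.ne']
  rw [hnodal, card_connectedComponents_setOf_kleinEigen_ne_zero]
  exact ⟨rfl, by decide⟩
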